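/- arXiv:2211.05395 — 4 statements merged into one kernel-verified Lean document; each statement's English description precedes it below -/
import Mathlib

section
/- Let (X,d) be a metric space and let W ⊆ X be a connected, infinite subset with compact closure. Set K₁ := closure(W), and suppose that for each k ≥ 1 we are given an open set U_k ⊆ X containing K_k and a continuous map f_k : U_k → X, and define K_{k+1} := f_k(K_k) and F_k := f_k ∘ f_{k-1} ∘ ⋯ ∘ f_1 (defined on K₁). Suppose further we are given positive real numbers ε_k, compact sets C_k ⊆ X with C_k ⊊ C_{k+1} and ⋃_k C_k = W, and open sets V′_k ⊆ X such that for every k ≥ 1: (i) V′_k ⊆ U_k and V′_k ∩ K_k ≠ ∅; (ii) max{ r_k , sup_{x ∈ K_k∖V′_k} d(f_k(x), x) } ≤ ε_k, where r_k := max{ d(x, F_k(C_k)) : x ∈ K_{k+1} }; (iii) V′_{k+1} ∩ F_k(C_k) = ∅. Then for every k ≥ 1, every integer m ≥ 0 and every x ∈ K_{k+1}, one has d(x, F_{k+m}(C_k)) ≤ Σ_{j=0}^{m} ε_{k+j}. -/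
open Filter Metric Set

/-- The key inductive estimate in the proof of Lemma 2.2: without assuming convergence of the
compositions `F k`, every `x ∈ K (k+1)` satisfies
`d(x, F (k+m) '' C k) ≤ ∑_{j=0}^{m} ε (k+j)` for all `m ≥ 0`. -/
theorem stmt1
    {X : Type*} [MetricSpace X]
    (W : Set X) (hWconn : IsConnected W) (hWinf : W.Infinite)
    (hWcl : IsCompact (closure W))
    (K : ℕ → Set X) (hK1 : K 1 = closure W)
    (U : ℕ → Set X) (hUopen : ∀ k ≥ 1, IsOpen (U k)) (hKU : ∀ k ≥ 1, K k ⊆ U k)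
    (f : ℕ → X → X) (hfcont : ∀ k ≥ 1, ContinuousOn (f k) (U k))
    (hKsucc : ∀ k ≥ 1, K (k + 1) = f k '' K k)
    (F : ℕ → X → X) (hF1 : ∀ x, F 1 x = f 1 x)
    (hFsucc : ∀ k ≥ 1, ∀ x, F (k + 1) x = f (k + 1) (F k x))
    (ε : ℕ → ℝ) (hε : ∀ k ≥ 1, 0 < ε k)
    (C : ℕ → Set X) (hCcompact : ∀ k ≥ 1, IsCompact (C k))
    (hCmono : ∀ k ≥ 1, C k ⊂ C (k + 1)) (hCunion : (⋃ k ≥ 1, C k) = W)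
    (V' : ℕ → Set X) (hV'open : ∀ k ≥ 1, IsOpen (V' k))
    -- (i)ₖ
    (hV'U : ∀ k ≥ 1, V' k ⊆ U k) (hV'K : ∀ k ≥ 1, (V' k ∩ K k).Nonempty)
    -- (ii)ₖ : both `r k` and the displacement of `f k` on `K k ∖ V' k` are at most `ε k`
    (hr : ∀ k ≥ 1, ∀ x ∈ K (k + 1), infDist x (F k '' C k) ≤ ε k)
    (hmove : ∀ k ≥ 1, ∀ x ∈ K k \ V' k, dist (f k x) x ≤ ε k)
    -- (iii)ₖ
    (hdisj : ∀ k ≥ 1, V' (k + 1) ∩ (F k '' C k) = ∅)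
 :
    ∀ k ≥ 1, ∀ m : ℕ, ∀ x ∈ K (k + 1),
      infDist x (F (k + m) '' C k) ≤ ∑ j ∈ Finset.range (m + 1), ε (k + j) := by
  have hCW : ∀ k ≥ 1, C k ⊆ W := by
    intro k hk
    rw [← hCunion]
    exact fun x hx => Set.mem_biUnion hk hx
  have hCsub : ∀ k ≥ 1, ∀ n : ℕ, C k ⊆ C (k + n) := by
    intro k hk n
    induction n with
    | zero => exact subset_rfl
    | succ n ih => exact ih.trans (hCmono (k + n) (by omega)).subset
  have hFK : ∀ j, j ≥ 1 → ∀ x ∈ K 1, F j x ∈ K (j + 1) := by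
    intro j
    induction j with
    | zero => omega
    | succ n ih =>
      intro hj x hx
      rcases Nat.lt_or_ge 1 (n + 1) with h | h
      · have hn : n ≥ 1 := by omega
        rw [hFsucc n hn, hKsucc (n + 1) (by omega)]
        exact mem_image_of_mem _ (ih hn x hx)
      · have hn : n = 0 := by omega
        subst hn
        rw [hF1, hKsucc 1 le_rfl]
        exact mem_image_of_mem _ hx
  intro k hk m
  induction m with
  | zero =>
    intro x hx
    simpa using hr k hk x hx
  | succ m ih =>
    intro x hx
    rcases Set.eq_empty_or_nonempty (C k) with hCe | hCne
    · rw [hCe, Set.image_empty, infDist_empty]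
      apply le_of_lt
      apply Finset.sum_pos
      · intro j _
        exact hε (k + j) (by omega)
      · exact ⟨0, Finset.mem_range.mpr (by omega)⟩
    · have hSne : (F (k + m) '' C k).Nonempty := hCne.image _
      have key : ∀ y ∈ F (k + m) '' C k,
          infDist x (F (k + m + 1) '' C k) ≤ dist x y + ε (k + m + 1) := by
        rintro y ⟨c, hc, rfl⟩
        have hcK1 : c ∈ K 1 := by
          rw [hK1]; exact subset_closure (hCW k hk hc)
        have hyK : F (k + m) c ∈ K (k + m + 1) := hFK (k + m) (by omega) c hcK1
        have hyV : F (k + m) c ∉ V' (k + m + 1) := by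
          intro hmem
          have hd := hdisj (k + m) (by omega)
          have : F (k + m) c ∈ V' (k + m + 1) ∩ (F (k + m) '' C k) :=
            ⟨hmem, ⟨c, hc, rfl⟩⟩
          have : F (k + m) c ∈ V' (k + m + 1) ∩ (F (k + m) '' C (k + m)) :=
            ⟨hmem, ⟨c, hCsub k hk m hc, rfl⟩⟩
          rw [hd] at this
          exact this
        have hmv := hmove (k + m + 1) (by omega) (F (k + m) c) ⟨hyK, hyV⟩
        have h1 : f (k + m + 1) (F (k + m) c) ∈ F (k + m + 1) '' C k :=
          ⟨c, hc, hFsucc (k + m) (by omega) c⟩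
        calc infDist x (F (k + m + 1) '' C k)
            ≤ dist x (f (k + m + 1) (F (k + m) c)) := infDist_le_dist_of_mem h1
          _ ≤ dist x (F (k + m) c) + dist (F (k + m) c) (f (k + m + 1) (F (k + m) c)) :=
              dist_triangle _ _ _
          _ ≤ dist x (F (k + m) c) + ε (k + m + 1) := by
              have := dist_comm (F (k + m) c) (f (k + m + 1) (F (k + m) c))
              linarith
      have h2 : infDist x (F (k + m + 1) '' C k) ≤ infDist x (F (k + m) '' C k)
          + ε (k + m + 1) := by
        by_contra hcon
        push_neg at hcon
        have : infDist x (F (k + m) '' C k) < infDist x (F (k + m + 1) '' C k)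
            - ε (k + m + 1) := by linarith
        obtain ⟨y, hyS, hy⟩ := (infDist_lt_iff hSne).mp this
        have := key y hyS
        linarith
      calc infDist x (F (k + (m + 1)) '' C k)
          ≤ infDist x (F (k + m) '' C k) + ε (k + m + 1) := h2
        _ ≤ (∑ j ∈ Finset.range (m + 1), ε (k + j)) + ε (k + (m + 1)) := by
            have he : ε (k + (m + 1)) = ε (k + m + 1) := rfl
            rw [he]
            linarith [ih x hx]
        _ = ∑ j ∈ Finset.range (m + 1 + 1), ε (k + j) := (Finset.sum_range_succ _ _).symm
end

section
/- Let d, n ≥ 1, let X ⊆ ℂ^d be a nonempty connected open set, and let g : X → ℂ^n be a holomorphic map which is non-constant and whose image g(X) is bounded. Then for every compact set M ⊆ X and every ε > 0 there exists a holomorphic map h : X → ℂ^n such that h(X) is dense in ℂ^n and sup_{x ∈ M} ‖g(x) − h(x)‖ < ε. -/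
/-!
A coordinate `f` of `g` is a non-constant bounded holomorphic function on `X`. By the maximum
modulus principle, a point `τ` of maximal modulus in the closure of `f(X)` is not a value of `f`,
so `w = (f - τ)⁻¹` is holomorphic on `X` with unbounded image. Pick `x_m ∈ X` with `|w(x_m)| → ∞`
and a dense sequence `q_m` in `ℂⁿ`, and interpolate: an entire `E : ℂ → ℂⁿ` with
`E(w(x_m)) = q_m - g(x_m)` which is `ε`-small on a disc containing `w(M)`. Then `h = g + E ∘ w`
takes every value `q_m`. The function `E` is a series whose `m`-th term is a multiple of
`(z / u_m)^N ∏_{k<m} (z - u_k) / (u_m - u_k)`, with `N` so large that the term is tiny on a disc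
of radius close to `|u_m|`.
-/

open Metric Set Filter Function Topology

theorem exists_mem_closure_notMem_image {E F : Type*} [NormedAddCommGroup E] [NormedSpace ℂ E]
    [NormedAddCommGroup F] [NormedSpace ℂ F] [StrictConvexSpace ℝ F] [ProperSpace F]
    {X : Set E} (hXo : IsOpen X) (hXc : IsPreconnected X) {f : E → F}
    (hf : DifferentiableOn ℂ f X) (hf_nc : ¬ ∃ c, ∀ x ∈ X, f x = c)
    (hfb : Bornology.IsBounded (f '' X)) :
    ∃ τ ∈ closure (f '' X), τ ∉ f '' X := by
  have hne : (f '' X).Nonempty := by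
    rw [image_nonempty, nonempty_iff_ne_empty]
    rintro rfl
    exact hf_nc ⟨0, by simp⟩
  obtain ⟨τ, hτ, hτ_max⟩ := hfb.isCompact_closure.exists_isMaxOn hne.closure
    continuous_norm.continuousOn
  refine ⟨τ, hτ, ?_⟩
  rintro ⟨x₁, hx₁, rfl⟩
  exact hf_nc ⟨f x₁, fun x hx => Complex.eqOn_of_isPreconnected_of_isMaxOn_norm hXc hXo hf hx₁
    (fun y hy => hτ_max (subset_closure (mem_image_of_mem f hy))) hx⟩

theorem not_isBounded_image_inv_sub {𝕜 : Type*} [NormedField 𝕜] {S : Set 𝕜} {τ : 𝕜}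
    (hτ : τ ∈ closure S) (hτS : τ ∉ S) :
    ¬ Bornology.IsBounded ((fun t => (t - τ)⁻¹) '' S) := by
  intro hb
  obtain ⟨C, hC₀, hC⟩ := hb.exists_pos_norm_le
  obtain ⟨b, hbS, hbτ⟩ := Metric.mem_closure_iff.mp hτ C⁻¹ (inv_pos.mpr hC₀)
  have hpos : 0 < ‖b - τ‖ := norm_pos_iff.mpr (sub_ne_zero.mpr (ne_of_mem_of_not_mem hbS hτS))
  rw [dist_comm, dist_eq_norm] at hbτ
  have h := hC _ (mem_image_of_mem _ hbS)
  rw [norm_inv] at h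
  exact (h.trans_lt ((lt_inv_comm₀ hpos hC₀).mp hbτ)).false

theorem exists_seq_strictMono_norm_of_not_isBounded {α E : Type*} [SeminormedAddGroup E]
    {X : Set α} {w : α → E} (hw : ¬ Bornology.IsBounded (w '' X)) (R : ℝ) :
    ∃ x : ℕ → α, (∀ m, x m ∈ X) ∧ StrictMono (fun m => ‖w (x m)‖) ∧
      Tendsto (fun m => ‖w (x m)‖) atTop atTop ∧ ∀ m, R < ‖w (x m)‖ := by
  have hfar : ∀ m : ℕ, ∃ x ∈ X, R + m < ‖w x‖ := by
    intro m
    by_contra! h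
    exact hw (isBounded_iff_forall_norm_le.mpr ⟨R + m, by rintro _ ⟨x, hx, rfl⟩; exact h x hx⟩)
  choose y hyX hy using hfar
  have hy_tendsto : Tendsto (fun m => ‖w (y m)‖) atTop atTop :=
    tendsto_atTop_mono (fun m => (hy m).le)
      (tendsto_atTop_add_const_left _ R tendsto_natCast_atTop_atTop)
  obtain ⟨φ, hφ, hφ_mono⟩ := strictMono_subseq_of_tendsto_atTop hy_tendsto
  exact ⟨y ∘ φ, fun m => hyX _, hφ_mono, hy_tendsto.comp hφ.tendsto_atTop,
    fun m => (le_add_of_nonneg_right (Nat.cast_nonneg _)).trans_lt (hy _)⟩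

theorem exists_apply_not_const {α ι : Type*} {β : ι → Type*} {p : ENNReal} {X : Set α}
    {g : α → PiLp p β} (hg : ¬ ∃ c, ∀ x ∈ X, g x = c) : ∃ j, ¬ ∃ c, ∀ x ∈ X, g x j = c := by
  by_contra! h
  choose c hc using h
  exact hg ⟨WithLp.toLp p c, fun x hx => PiLp.ext fun j => hc j x hx⟩

section Interpolation

variable {V : Type*} [NormedAddCommGroup V] [NormedSpace ℂ V] [CompleteSpace V]

theorem exists_differentiable_eq_one_eq_zero_norm_le {a : ℂ} {s : Finset ℂ} (ha : a ∉ s)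
    {ρ η : ℝ} (hρ₀ : 0 ≤ ρ) (hρa : ρ < ‖a‖) (hη : 0 < η) :
    ∃ φ : ℂ → ℂ, Differentiable ℂ φ ∧ φ a = 1 ∧ (∀ b ∈ s, φ b = 0) ∧
      ∀ z, ‖z‖ ≤ ρ → ‖φ z‖ ≤ η := by
  have ha₀ : a ≠ 0 := norm_pos_iff.mp (hρ₀.trans_lt hρa)
  set P : ℂ → ℂ := fun z => ∏ b ∈ s, (z - b) / (a - b)
  have hP : Differentiable ℂ P := by fun_prop
  obtain ⟨C, hC⟩ :=
    (isCompact_closedBall (0 : ℂ) ρ).exists_bound_of_continuousOn hP.continuous.continuousOn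
  have hr : ρ / ‖a‖ < 1 := (div_lt_one (hρ₀.trans_lt hρa)).mpr hρa
  have hlim : Tendsto (fun N : ℕ => (ρ / ‖a‖) ^ N * C) atTop (𝓝 0) := by
    simpa using (tendsto_pow_atTop_nhds_zero_of_lt_one (by positivity) hr).mul_const C
  obtain ⟨N, hN⟩ := (hlim.eventually (gt_mem_nhds hη)).exists
  refine ⟨fun z => (z / a) ^ N * P z, by fun_prop, ?_, fun b hb => ?_, fun z hz => ?_⟩
  · simp only [P, div_self ha₀, one_pow, one_mul]
    exact Finset.prod_eq_one fun b hb =>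
      div_self (sub_ne_zero.mpr (ne_of_mem_of_not_mem hb ha).symm)
  · simp [P, Finset.prod_eq_zero hb]
  · calc ‖(z / a) ^ N * P z‖ = ‖z / a‖ ^ N * ‖P z‖ := by rw [norm_mul, norm_pow]
      _ ≤ (ρ / ‖a‖) ^ N * C := by
          gcongr
          · rw [norm_div]; gcongr
          · exact hC z (mem_closedBall_zero_iff.mpr hz)
      _ ≤ η := hN.le

theorem differentiable_tsum_of_eventually_norm_le {F : ℕ → ℂ → V} {δ : ℕ → ℝ}
    (hδ : Summable δ) (hF : ∀ n, Differentiable ℂ (F n))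
    (hFδ : ∀ r, ∀ᶠ n in atTop, ∀ z, ‖z‖ < r → ‖F n z‖ ≤ δ n) :
    Differentiable ℂ (fun z => ∑' n, F n z) := by
  intro z₀
  have hU : ∀ᶠ n in atTop, ∀ z ∈ ball (0 : ℂ) (‖z₀‖ + 1), ‖F n z‖ ≤ δ n := by
    filter_upwards [hFδ (‖z₀‖ + 1)] with n hn z hz using hn z (mem_ball_zero_iff.mp hz)
  have hlim := (tendstoUniformlyOn_tsum_nat_eventually hδ hU).tendstoLocallyUniformlyOn
  have hdiff := hlim.differentiableOn (Eventually.of_forall fun N =>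
    DifferentiableOn.fun_sum fun n _ => (hF n).differentiableOn) isOpen_ball
  exact hdiff.differentiableAt (isOpen_ball.mem_nhds (by simp))

theorem exists_differentiable_interpolation_of_corrections {u : ℕ → ℂ} {ρ δ : ℕ → ℝ}
    (hρ : Tendsto ρ atTop atTop) (hδ : Summable δ)
    (hcorr : ∀ m (c : V), ∃ G : ℂ → V, Differentiable ℂ G ∧ G (u m) = c ∧
      (∀ k < m, G (u k) = 0) ∧ ∀ z, ‖z‖ ≤ ρ m → ‖G z‖ ≤ δ m)
    (val : ℕ → V) :
    ∃ E : ℂ → V, Differentiable ℂ E ∧ (∀ m, E (u m) = val m) ∧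
      ∀ z, (∀ m, ‖z‖ ≤ ρ m) → ‖E z‖ ≤ ∑' m, δ m := by
  choose G hG_diff hG_eq hG_zero hG_le using hcorr
  -- partial sums: the `m`-th correction fixes the value at `u m` and keeps the earlier ones
  obtain ⟨S, hS₀, hS⟩ : ∃ S : ℕ → ℂ → V, S 0 = 0 ∧
      ∀ m, S (m + 1) = S m + G m (val m - S m (u m)) :=
    ⟨fun m => Nat.rec 0 (fun m Sm => Sm + G m (val m - Sm (u m))) m, rfl, fun _ => rfl⟩
  set T : ℕ → ℂ → V := fun m => G m (val m - S m (u m))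
  have hT : ∀ m, T m = S (m + 1) - S m := fun m => by rw [hS]; abel
  refine ⟨fun z => ∑' m, T m z, ?_, fun m => ?_, fun z hz => ?_⟩
  · refine differentiable_tsum_of_eventually_norm_le hδ (fun m => hG_diff _ _) fun r => ?_
    filter_upwards [hρ.eventually_ge_atTop r] with m hm z hz using hG_le _ _ z (hz.le.trans hm)
  · have hvanish : ∀ k ∉ Finset.range (m + 1), T k (u m) = 0 := fun k hk =>
      hG_zero _ _ m (by simpa using hk)
    calc ∑' k, T k (u m) = ∑ k ∈ Finset.range (m + 1), T k (u m) := tsum_eq_sum hvanish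
      _ = S (m + 1) (u m) := by simp [hT, Finset.sum_range_sub (fun k => S k (u m)), hS₀]
      _ = val m := by simp [hS, hG_eq]
  · exact tsum_of_norm_bounded hδ.hasSum fun m => hG_le _ _ z (hz m)

theorem exists_differentiable_interpolation {u : ℕ → ℂ} (hu : Injective u)
    (hu_tendsto : Tendsto (fun m => ‖u m‖) atTop atTop) {R : ℝ} (hR : 0 ≤ R)
    (huR : ∀ m, R < ‖u m‖) (val : ℕ → V) {ε : ℝ} (hε : 0 < ε) :
    ∃ E : ℂ → V, Differentiable ℂ E ∧ (∀ m, E (u m) = val m) ∧ ∀ z, ‖z‖ ≤ R → ‖E z‖ < ε := by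
  set δ : ℕ → ℝ := fun m => ε / 2 / 2 / 2 ^ m
  have hδ : HasSum δ (ε / 2) := hasSum_geometric_two' (ε / 2)
  have hρ : Tendsto (fun m => (R + ‖u m‖) / 2) atTop atTop :=
    (tendsto_atTop_add_const_left _ R hu_tendsto).atTop_div_const two_pos
  have hcorr : ∀ m (c : V), ∃ G : ℂ → V, Differentiable ℂ G ∧ G (u m) = c ∧
      (∀ k < m, G (u k) = 0) ∧ ∀ z, ‖z‖ ≤ (R + ‖u m‖) / 2 → ‖G z‖ ≤ δ m := by
    intro m c
    have hum : u m ∉ (Finset.range m).image u := by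
      simp only [Finset.mem_image, Finset.mem_range, not_exists, not_and]
      exact fun k hk h => hk.ne (hu h)
    obtain ⟨φ, hφ, hφ_one, hφ_zero, hφ_le⟩ := exists_differentiable_eq_one_eq_zero_norm_le hum
      (ρ := (R + ‖u m‖) / 2) (by linarith [huR m]) (by linarith [huR m])
      (show 0 < δ m / (‖c‖ + 1) by positivity)
    refine ⟨fun z => φ z • c, hφ.smul_const c, by simp [hφ_one], fun k hk => ?_, fun z hz => ?_⟩
    · simp [hφ_zero _ (Finset.mem_image_of_mem u (Finset.mem_range.mpr hk))]
    · calc ‖φ z • c‖ = ‖φ z‖ * ‖c‖ := norm_smul _ _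
        _ ≤ δ m / (‖c‖ + 1) * (‖c‖ + 1) := by gcongr; exacts [hφ_le z hz, by linarith]
        _ = δ m := div_mul_cancel₀ _ (by positivity)
  obtain ⟨E, hE, hE_eq, hE_le⟩ :=
    exists_differentiable_interpolation_of_corrections hρ hδ.summable hcorr val
  refine ⟨E, hE, hE_eq, fun z hz => ?_⟩
  calc ‖E z‖ ≤ ∑' m, δ m := hE_le z fun m => by linarith [huR m]
    _ = ε / 2 := hδ.tsum_eq
    _ < ε := half_lt_self hε

end Interpolation

theorem stmt3_general
    (d n : ℕ)
    (X : Set (EuclideanSpace ℂ (Fin d))) (hXopen : IsOpen X) (hXconn : IsConnected X)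
    (g : EuclideanSpace ℂ (Fin d) → EuclideanSpace ℂ (Fin n))
    (hg : DifferentiableOn ℂ g X)
    (hgnc : ¬ ∃ c, ∀ x ∈ X, g x = c)
    (hgb : Bornology.IsBounded (g '' X))
    (M : Set (EuclideanSpace ℂ (Fin d))) (hM : IsCompact M) (hMX : M ⊆ X)
    (ε : ℝ) (hε : 0 < ε) :
    ∃ h : EuclideanSpace ℂ (Fin d) → EuclideanSpace ℂ (Fin n),
      DifferentiableOn ℂ h X ∧ Dense (h '' X) ∧ ∀ x ∈ M, ‖g x - h x‖ < ε := by
  obtain ⟨j, hj⟩ := exists_apply_not_const hgnc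
  set f : EuclideanSpace ℂ (Fin d) → ℂ := fun x => g x j
  have hf : DifferentiableOn ℂ f X :=
    (EuclideanSpace.proj (𝕜 := ℂ) j).differentiable.comp_differentiableOn hg
  have hfb : Bornology.IsBounded (f '' X) := by
    simpa [image_image] using (EuclideanSpace.proj (𝕜 := ℂ) j).lipschitz.isBounded_image hgb
  obtain ⟨τ, hτ, hτX⟩ := exists_mem_closure_notMem_image hXopen hXconn.isPreconnected hf hj hfb
  set w : EuclideanSpace ℂ (Fin d) → ℂ := fun x => (f x - τ)⁻¹
  have hw : DifferentiableOn ℂ w X :=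
    (hf.sub_const τ).inv fun x hx => sub_ne_zero.mpr fun h => hτX ⟨x, hx, h⟩
  have hw_unbdd : ¬ Bornology.IsBounded (w '' X) := by
    simpa only [image_image] using not_isBounded_image_inv_sub hτ hτX
  obtain ⟨R, hR₀, hR⟩ :=
    (hM.image_of_continuousOn (hw.continuousOn.mono hMX)).isBounded.exists_pos_norm_le
  obtain ⟨x, hxX, hx_mono, hx_tendsto, hxR⟩ :=
    exists_seq_strictMono_norm_of_not_isBounded hw_unbdd R
  obtain ⟨q, hq⟩ := TopologicalSpace.exists_dense_seq (EuclideanSpace ℂ (Fin n))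
  obtain ⟨E, hE, hE_eq, hE_lt⟩ := exists_differentiable_interpolation hx_mono.injective.of_comp
    hx_tendsto hR₀.le hxR (fun m => q m - g (x m)) hε
  refine ⟨fun z => g z + E (w z), hg.add (hE.comp_differentiableOn hw), hq.mono ?_, fun z hz => ?_⟩
  · rintro _ ⟨m, rfl⟩
    exact ⟨x m, hxX m, by simp [hE_eq]⟩
  · simpa using hE_lt _ (hR _ (mem_image_of_mem w hz))

/-- Theorem 1.2 specialized to `Y = ℂ^n`, `X ⊆ ℂ^d` a nonempty connected open set:
any non-constant holomorphic map `g : X → ℂ^n` with bounded image can be approximated,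
uniformly on any compact `M ⊆ X` and within any `ε > 0`, by a holomorphic map
`h : X → ℂ^n` with dense image. -/
theorem stmt3
    (d n : ℕ) (hd : 1 ≤ d) (hn : 1 ≤ n)
    (X : Set (EuclideanSpace ℂ (Fin d))) (hXopen : IsOpen X) (hXconn : IsConnected X)
    (g : EuclideanSpace ℂ (Fin d) → EuclideanSpace ℂ (Fin n))
    (hg : DifferentiableOn ℂ g X)
    (hgnc : ¬ ∃ c, ∀ x ∈ X, g x = c)
    (hgb : Bornology.IsBounded (g '' X))
    (M : Set (EuclideanSpace ℂ (Fin d))) (hM : IsCompact M) (hMX : M ⊆ X)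
    (ε : ℝ) (hε : 0 < ε) :
    ∃ h : EuclideanSpace ℂ (Fin d) → EuclideanSpace ℂ (Fin n),
      DifferentiableOn ℂ h X ∧ Dense (h '' X) ∧ ∀ x ∈ M, ‖g x - h x‖ < ε :=
  stmt3_general d n X hXopen hXconn g hg hgnc hgb M hM hMX ε hε
end

section
/- Let g : 𝔻 → ℂ be a non-constant bounded holomorphic function on the open unit disc 𝔻 ⊆ ℂ. Then for every compact set M ⊆ 𝔻 and every ε > 0 there exists a holomorphic function h : 𝔻 → ℂ such that h(𝔻) is dense in ℂ and sup_{z ∈ M} |g(z) − h(z)| < ε. -/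
open Metric Set

/-!
Since `g` is non-constant, `Ω = g(𝔻)` is open by the open mapping theorem, and since it is bounded
it misses a point. Pick `p = g 0` and a point `w ∉ Ω` nearest to `p`, so that the disc
`B(p, |w - p|) ⊆ Ω` has `w` on its boundary. The function `ζ ↦ exp (i (w - p) / (w - ζ))` has an
essential singularity at `w` and takes every nonzero value `v` on that disc arbitrarily close to `w`
(at `ζ = w - (w - p) / t` with `exp (i t) = v` and `Re t` large). Hence
`h = g + δ exp (i (w - p) / (w - g))` is holomorphic on `𝔻`, `δ`-close to `g` on `M` for a small
`δ > 0`, and its image contains points arbitrarily close to `w + δ v` for every `v ≠ 0`.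
-/

theorem IsOpen.exists_notMem_ball_dist_subset {α : Type*} [MetricSpace α] [ProperSpace α]
    {Ω : Set α} (hΩ : IsOpen Ω) (hΩc : Ωᶜ.Nonempty) (x : α) :
    ∃ y ∉ Ω, ball x (dist y x) ⊆ Ω := by
  obtain ⟨y, hy, hd⟩ := hΩ.isClosed_compl.exists_infDist_eq_dist hΩc x
  refine ⟨y, hy, ?_⟩
  simpa [dist_comm, ← hd] using ball_infDist_subset_compl (x := x) (s := Ωᶜ)

theorem IsCompact.exists_pos_mul_norm_lt {X E : Type*} [TopologicalSpace X]
    [SeminormedAddCommGroup E] {K : Set X} {f : X → E} (hK : IsCompact K) (hf : ContinuousOn f K)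
    {ε : ℝ} (hε : 0 < ε) : ∃ δ > 0, ∀ x ∈ K, δ * ‖f x‖ < ε := by
  obtain ⟨B, hB⟩ := hK.exists_bound_of_continuousOn hf
  refine ⟨ε / (|B| + 1), by positivity, fun x hx => ?_⟩
  calc ε / (|B| + 1) * ‖f x‖ ≤ ε / (|B| + 1) * |B| := by
        gcongr; exact (hB x hx).trans (le_abs_self B)
    _ < ε := by
        rw [div_mul_eq_mul_div, div_lt_iff₀ (by positivity)]
        linarith

namespace Complex

theorem norm_one_sub_inv_lt_one {t : ℂ} (ht : 1 / 2 < t.re) : ‖1 - t⁻¹‖ < 1 := by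
  have ht0 : t ≠ 0 := by rintro rfl; norm_num at ht
  have hsq : ‖t - 1‖ ^ 2 < ‖t‖ ^ 2 := by
    simp only [← normSq_eq_norm_sq, normSq_apply, sub_re, sub_im, one_re, one_im]
    nlinarith
  have hlt : ‖t - 1‖ < ‖t‖ := lt_of_pow_lt_pow_left₀ 2 (norm_nonneg t) hsq
  rwa [show 1 - t⁻¹ = (t - 1) / t by field_simp, norm_div, div_lt_one (norm_pos_iff.2 ht0)]

theorem exists_lt_re_exp_I_mul_eq {v : ℂ} (hv : v ≠ 0) (R : ℝ) :
    ∃ t : ℂ, R < t.re ∧ exp (I * t) = v := by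
  obtain ⟨n, hn⟩ := exists_nat_gt ((R - (log v).im) / (2 * Real.pi))
  refine ⟨-I * log v + 2 * Real.pi * n, ?_, ?_⟩
  · have hre : (-I * log v + 2 * Real.pi * n).re = (log v).im + 2 * Real.pi * n := by simp
    rw [hre]
    linarith [(div_lt_iff₀ Real.two_pi_pos).mp hn]
  · have hlog : I * (-I * log v + 2 * Real.pi * n) = log v + (n : ℤ) * (2 * Real.pi * I) := by
      push_cast
      linear_combination (-log v) * I_sq
    rw [hlog, exp_add, exp_log hv, exp_int_mul_two_pi_mul_I, mul_one]

theorem dense_image_add_mul_exp {p w δ : ℂ} (hwp : w ≠ p) (hδ : δ ≠ 0) :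
    Dense ((fun ζ => ζ + δ * exp (I * (w - p) / (w - ζ))) '' ball p ‖w - p‖) := by
  refine dense_closure.1 ((dense_compl_singleton w).mono fun c (hc : c ≠ w) => ?_)
  rw [Metric.mem_closure_iff]
  intro η hη
  obtain ⟨t, ht, hexp⟩ := exists_lt_re_exp_I_mul_eq (div_ne_zero (sub_ne_zero.2 hc) hδ)
    (max (1 / 2) (‖w - p‖ / η))
  have hwp' : w - p ≠ 0 := sub_ne_zero.2 hwp
  have ht_half : 1 / 2 < t.re := (le_max_left _ _).trans_lt ht
  have ht_pos : 0 < t.re := by linarith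
  refine ⟨_, mem_image_of_mem _ (x := w - (w - p) / t) ?_, ?_⟩
  · rw [mem_ball, dist_eq_norm, show w - (w - p) / t - p = (w - p) * (1 - t⁻¹) by ring, norm_mul]
    exact mul_lt_of_lt_one_right (norm_pos_iff.2 hwp') (norm_one_sub_inv_lt_one ht_half)
  · have hexponent : I * (w - p) / (w - (w - (w - p) / t)) = I * t := by
      rw [sub_sub_cancel, mul_div_assoc, div_div_cancel₀ hwp']
    rw [hexponent, hexp,
      show w - (w - p) / t + δ * ((c - w) / δ) = c - (w - p) / t by field_simp; ring,
      dist_eq_norm, sub_sub_cancel, norm_div]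
    have hη' : ‖w - p‖ < t.re * η := (div_lt_iff₀ hη).1 ((le_max_right _ _).trans_lt ht)
    calc ‖w - p‖ / ‖t‖ ≤ ‖w - p‖ / t.re := by gcongr; exact re_le_norm t
      _ < η := (div_lt_iff₀' ht_pos).2 hη'

end Complex

/-- Theorem 1.2 in the special case `X = 𝔻`, `Y = ℂ`: any non-constant bounded holomorphic
function `g` on the open unit disc can be approximated, uniformly on any compact `M ⊆ 𝔻` and
within any `ε > 0`, by a holomorphic function `h : 𝔻 → ℂ` with dense image. -/
theorem stmt4
    (g : ℂ → ℂ) (hg : DifferentiableOn ℂ g (ball (0 : ℂ) 1))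
    (hgnc : ¬ ∃ c, ∀ z ∈ ball (0 : ℂ) 1, g z = c)
    (hgb : Bornology.IsBounded (g '' ball (0 : ℂ) 1))
    (M : Set ℂ) (hM : IsCompact M) (hMX : M ⊆ ball (0 : ℂ) 1)
    (ε : ℝ) (hε : 0 < ε) :
    ∃ h : ℂ → ℂ, DifferentiableOn ℂ h (ball (0 : ℂ) 1) ∧
      Dense (h '' ball (0 : ℂ) 1) ∧ ∀ z ∈ M, ‖g z - h z‖ < ε := by
  have hΩ : IsOpen (g '' ball 0 1) :=
    ((hg.analyticOnNhd isOpen_ball).is_constant_or_isOpen (convex_ball 0 1).isPreconnected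
      |>.resolve_left hgnc) _ subset_rfl isOpen_ball
  have hp : g 0 ∈ g '' ball 0 1 := mem_image_of_mem g (mem_ball_self one_pos)
  obtain ⟨w, hw, hball⟩ := hΩ.exists_notMem_ball_dist_subset
    (nonempty_compl.2 fun h => NormedSpace.unbounded_univ ℂ ℂ (h ▸ hgb)) (g 0)
  rw [dist_eq_norm] at hball
  have hgw : ∀ z ∈ ball (0 : ℂ) 1, w - g z ≠ 0 := fun z hz h =>
    hw (sub_eq_zero.1 h ▸ mem_image_of_mem g hz)
  set E : ℂ → ℂ := fun ζ => Complex.exp (Complex.I * (w - g 0) / (w - ζ))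
  have hEg : DifferentiableOn ℂ (E ∘ g) (ball 0 1) :=
    ((differentiableOn_const _).div ((differentiableOn_const w).sub hg) hgw).cexp
  obtain ⟨δ, hδ, hδM⟩ := hM.exists_pos_mul_norm_lt (hEg.continuousOn.mono hMX) hε
  refine ⟨fun z => g z + δ * E (g z), hg.add (hEg.const_mul _), ?_, fun z hz => ?_⟩
  · refine (Complex.dense_image_add_mul_exp (ne_of_mem_of_not_mem hp hw).symm
      (Complex.ofReal_ne_zero.2 hδ.ne')).mono ?_
    exact (image_mono hball).trans (image_image _ _ _).subset
  · simpa [norm_mul, abs_of_pos hδ] using hδM z hz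
end

section
/- Let n ≥ 1 and let K := { z ∈ ℂ^n : ‖z‖ ≤ 1 } be the closed unit ball (‖·‖ the Euclidean norm), with open unit ball 𝔹^n := { z ∈ ℂ^n : ‖z‖ < 1 }. Then there exist open sets U_k ⊆ ℂ^n with K ⊆ U_k for every k ≥ 1 and holomorphic maps F_k : U_k → ℂ^n, such that the sequence (F_k) converges uniformly on every compact subset of 𝔹^n to a map F : 𝔹^n → ℂ^n whose image F(𝔹^n) is dense in ℂ^n. -/
/-!
The map `Φ z = (sin (z j / (1 - z i₀)))ⱼ` is holomorphic on the unit ball and maps it onto `ℂⁿ`: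
to hit `w`, solve `sin ηⱼ = wⱼ`, using `2π`-periodicity to make `Re η_{i₀}` large, and take
`z = (1 + η_{i₀})⁻¹ • η`. Then `z j / (1 - z i₀) = ηⱼ`, and `z` lies in the ball because
`‖η‖² < |1 + η_{i₀}|² = |η_{i₀}|² + 2 Re η_{i₀} + 1`. The dilations `z ↦ Φ (rₖ • z)`, `rₖ ↑ 1`,
are holomorphic on the balls of radius `rₖ⁻¹ > 1` and converge to `Φ` uniformly on compact
subsets of the open ball.
-/

open Filter Metric Set Topology

section Dilation

variable {E G : Type*} [NormedAddCommGroup E] [NormedSpace ℂ E]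

theorem tendstoUniformlyOn_comp_smul [UniformSpace G] {f : E → G}
    (hf : ContinuousOn f (ball 0 1)) {c : Set E} (hc : IsCompact c) (hcb : c ⊆ ball 0 1) :
    TendstoUniformlyOn (fun (r : ℝ) z => f (r • z)) f (𝓝[Icc 0 1] 1) c := by
  have hcont :
      ContinuousOn (Function.uncurry fun (r : ℝ) (z : E) => f (r • z)) (Icc 0 1 ×ˢ c) := by
    refine hf.comp (by fun_prop) fun p ⟨hr, hz⟩ => ?_
    rw [mem_ball_zero_iff, norm_smul, Real.norm_of_nonneg hr.1]
    exact (mul_le_of_le_one_left (norm_nonneg _) hr.2).trans_lt (mem_ball_zero_iff.mp (hcb hz))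
  intro u hu
  obtain ⟨v, hv, hvu⟩ := hc.mem_uniformity_of_prod hcont (right_mem_Icc.mpr zero_le_one)
    (symm_le_uniformity hu)
  filter_upwards [hv] with r hr z hz
  simpa using hvu r hr z hz

theorem DifferentiableOn.comp_smul_ball [NormedAddCommGroup G] [NormedSpace ℂ G] {f : E → G}
    (hf : DifferentiableOn ℂ f (ball 0 1)) {r : ℝ} (hr : 0 < r) :
    DifferentiableOn ℂ (fun z => f (r • z)) (ball 0 r⁻¹) := by
  refine hf.comp (differentiableOn_id.const_smul r) fun z hz => ?_
  rw [mem_ball_zero_iff, norm_smul, Real.norm_of_nonneg hr.le]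
  rw [mem_ball_zero_iff] at hz
  calc r * ‖z‖ < r * r⁻¹ := by gcongr
    _ = 1 := mul_inv_cancel₀ hr.ne'

theorem exists_tendstoUniformlyOn_of_differentiableOn_ball [NormedAddCommGroup G]
    [NormedSpace ℂ G] {f : E → G} (hf : DifferentiableOn ℂ f (ball 0 1)) :
    ∃ U : ℕ → Set E, ∃ F : ℕ → E → G,
      (∀ k, IsOpen (U k)) ∧ (∀ k, closedBall 0 1 ⊆ U k) ∧
      (∀ k, DifferentiableOn ℂ (F k) (U k)) ∧
      ∀ c, IsCompact c → c ⊆ ball 0 1 → TendstoUniformlyOn F f atTop c := by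
  obtain ⟨r, -, hr01, hr1⟩ := exists_seq_strictMono_tendsto' (zero_lt_one' ℝ)
  refine ⟨fun k => ball 0 (r k)⁻¹, fun k z => f (r k • z), fun k => isOpen_ball,
    fun k => closedBall_subset_ball ((one_lt_inv₀ (hr01 k).1).mpr (hr01 k).2),
    fun k => hf.comp_smul_ball (hr01 k).1, fun c hc hcb => ?_⟩
  exact (tendstoUniformlyOn_comp_smul hf.continuousOn hc hcb).seq_tendstoUniformlyOn r
    (tendsto_nhdsWithin_iff.mpr ⟨hr1, .of_forall fun k => Ioo_subset_Icc_self (hr01 k)⟩)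

end Dilation

theorem Complex.exists_sin_eq_lt_re (w : ℂ) (R : ℝ) : ∃ ξ : ℂ, sin ξ = w ∧ R < ξ.re := by
  obtain ⟨ξ, rfl⟩ := sin_surjective w
  obtain ⟨k, hk⟩ := exists_nat_gt ((R - ξ.re) / (2 * Real.pi))
  refine ⟨ξ + k * (2 * Real.pi), sin_add_nat_mul_two_pi ξ k, ?_⟩
  rw [div_lt_iff₀ Real.two_pi_pos] at hk
  have hre : (ξ + k * (2 * Real.pi)).re = ξ.re + k * (2 * Real.pi) := by simp
  linarith

theorem inv_one_add_mul_div_one_sub {K : Type*} [Field K] {a : K} (ha : 1 + a ≠ 0) (b : K) :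
    (1 + a)⁻¹ * b / (1 - (1 + a)⁻¹ * a) = b := by
  field_simp
  ring

section SinMap

variable {ι : Type*} [Fintype ι]

noncomputable def sinDivOneSub (i₀ : ι) (z : EuclideanSpace ℂ ι) : EuclideanSpace ℂ ι :=
  WithLp.toLp 2 fun j => Complex.sin (z j / (1 - z i₀))

theorem differentiableOn_sinDivOneSub (i₀ : ι) :
    DifferentiableOn ℂ (sinDivOneSub i₀) (ball 0 1) := by
  rw [differentiableOn_piLp]
  intro j z hz
  have hz₀ : 1 - z i₀ ≠ 0 := by
    refine sub_ne_zero.mpr fun h => ?_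
    have := (PiLp.norm_apply_le z i₀).trans_lt (mem_ball_zero_iff.mp hz)
    simp [← h] at this
  exact DifferentiableAt.differentiableWithinAt (by fun_prop (disch := exact hz₀))

theorem sinDivOneSub_surjOn (i₀ : ι) : SurjOn (sinDivOneSub i₀) (ball 0 1) univ := by
  classical
  intro w _
  choose ξ hξ using fun j => Complex.sin_surjective (w j)
  obtain ⟨ξ₀, hξ₀, hre⟩ := Complex.exists_sin_eq_lt_re (w i₀) (∑ j, ‖ξ j‖ ^ 2)
  obtain ⟨η, hη₀, hηξ⟩ : ∃ η : ι → ℂ, η i₀ = ξ₀ ∧ ∀ j ≠ i₀, η j = ξ j :=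
    ⟨Function.update ξ i₀ ξ₀, Function.update_self .., fun j hj => Function.update_of_ne hj ..⟩
  have hsum : ∑ j, ‖η j‖ ^ 2 < ‖1 + η i₀‖ ^ 2 := by
    have hrest : ∑ j ∈ {i₀}ᶜ, ‖η j‖ ^ 2 ≤ ∑ j, ‖ξ j‖ ^ 2 := by
      rw [Finset.sum_congr rfl fun j hj => by rw [hηξ j (by simpa using hj)]]
      exact Finset.sum_le_sum_of_subset_of_nonneg (Finset.subset_univ _) fun j _ _ => by positivity
    have hsq : ‖1 + ξ₀‖ ^ 2 = ‖ξ₀‖ ^ 2 + 2 * ξ₀.re + 1 := by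
      simp only [Complex.sq_norm, Complex.normSq_apply, Complex.add_re, Complex.add_im,
        Complex.one_re, Complex.one_im]
      ring
    have hsum0 : 0 ≤ ∑ j, ‖ξ j‖ ^ 2 := Finset.sum_nonneg fun j _ => by positivity
    rw [Fintype.sum_eq_add_sum_compl i₀, hη₀, hsq]
    linarith
  have hη : 1 + η i₀ ≠ 0 := by
    have := (Finset.sum_nonneg fun j _ => by positivity).trans_lt hsum
    rintro h
    simp [h] at this
  refine ⟨WithLp.toLp 2 ((1 + η i₀)⁻¹ • η), ?_, ?_⟩
  · rw [mem_ball_zero_iff, ← sq_lt_sq₀ (norm_nonneg _) zero_le_one, EuclideanSpace.norm_sq_eq]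
    simp only [Pi.smul_apply, smul_eq_mul, norm_mul, norm_inv, mul_pow,
      ← Finset.mul_sum, inv_pow, one_pow]
    exact (inv_mul_lt_one₀ (by positivity)).mpr hsum
  · ext j
    simp only [sinDivOneSub, PiLp.toLp_apply, Pi.smul_apply, smul_eq_mul,
      inv_one_add_mul_div_one_sub hη]
    by_cases hj : j = i₀
    · rw [hj, hη₀, hξ₀]
    · rw [hηξ j hj, hξ j]

end SinMap

/-- Theorem 1.4 specialized to `Y = ℂ^n` and `K` the closed unit ball, where `Γ` is the unit
sphere and `K ∖ Γ = 𝔹^n` is the open unit ball: there exist open neighborhoods `U k` of `K`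
and holomorphic maps `F k : U k → ℂ^n` converging uniformly on compact subsets of `𝔹^n` to a
map `F` whose image `F (𝔹^n)` is dense in `ℂ^n`. -/
theorem stmt10
    (n : ℕ) (hn : 1 ≤ n) :
    ∃ U : ℕ → Set (EuclideanSpace ℂ (Fin n)),
      ∃ F : ℕ → EuclideanSpace ℂ (Fin n) → EuclideanSpace ℂ (Fin n),
      ∃ Fl : EuclideanSpace ℂ (Fin n) → EuclideanSpace ℂ (Fin n),
        (∀ k, IsOpen (U k)) ∧ (∀ k, closedBall (0 : EuclideanSpace ℂ (Fin n)) 1 ⊆ U k) ∧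
        (∀ k, DifferentiableOn ℂ (F k) (U k)) ∧
        (∀ c : Set (EuclideanSpace ℂ (Fin n)), IsCompact c →
          c ⊆ ball (0 : EuclideanSpace ℂ (Fin n)) 1 →
          TendstoUniformlyOn (fun k => F k) Fl atTop c) ∧
        Dense (Fl '' ball (0 : EuclideanSpace ℂ (Fin n)) 1) := by
  have i₀ : Fin n := ⟨0, hn⟩
  obtain ⟨U, F, hU, hKU, hF, hF_lim⟩ :=
    exists_tendstoUniformlyOn_of_differentiableOn_ball (differentiableOn_sinDivOneSub i₀)
  exact ⟨U, F, sinDivOneSub i₀, hU, hKU, hF, hF_lim, dense_univ.mono (sinDivOneSub_surjOn i₀)⟩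
end
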